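/- With Ψ_m, Λ_m ∈ NSym as above (Ψ defined by dσ(t)/dt = σ(t)ψ(t), σ(t)λ(-t)=1), for each m ≥ 1 one has Λ_m = (-1)^m ∑_{I ∈ C_m} ((-1)^{ℓ(I)}/π_u(Ī)) Ψ^I, where Ī is the mirror image (reversal) of I and π_u(I) = ∏_j (i_1 + ... + i_j). -/

import Mathlib

/-- `NSym`, the free associative `ℚ`-algebra on noncommuting generators `Λ_1, Λ_2, ...`. -/
noncomputable abbrev NSym : Type := FreeAlgebra ℚ ℕ

/-- The elementary noncommutative symmetric functions: `Λ_0 = 1` and `Λ_m` is the `m`-th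
generator for `m ≥ 1`. -/
noncomputable def Lam : ℕ → NSym := fun m => if m = 0 then 1 else FreeAlgebra.ι ℚ m

/-- `π_u(I) = ∏_{j=1}^{k} (i_1 + ... + i_j)` for a composition `I = (i_1,...,i_k)`,
given by its list of parts. -/
def piu (l : List ℕ) : ℕ :=
  ((List.range l.length).map fun j => (l.take (j + 1)).sum).prod

/-!
Write `μ(t) = λ(-t)`. Differentiating `σ(t) μ(t) = 1` and using `σ' = σ ψ` gives
`σ (ψ μ + μ') = 0`; since `μ`, hence `σ`, is invertible, `μ' = -ψ μ`, that is
`(k + 1) μ_{k+1} = -∑_{i ≤ k} Ψ_{i+1} μ_{k-i}`. Solving this recursion by splitting off the first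
block of a composition gives `μ_m = ∑_{I ∈ C_m} ((-1)^{ℓ(I)} / π_u(Ī)) Ψ^I`: prepending a block to a
composition of `m - i` adds one part and multiplies `π_u` of the reversal by `m`, which is exactly
the factor `-1/m` of the recursion. Finally `Λ_m = (-1)^m μ_m`.
-/

open PowerSeries

namespace PowerSeries

section Semiring

variable {R : Type*} [Semiring R]

-- Mathlib's `PowerSeries.derivative` needs a commutative coefficient ring.
noncomputable def ncDeriv (f : R⟦X⟧) : R⟦X⟧ :=
  mk fun k => (k + 1) • coeff (k + 1) f

@[simp]
theorem coeff_ncDeriv (f : R⟦X⟧) (k : ℕ) : coeff k (ncDeriv f) = (k + 1) • coeff (k + 1) f :=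
  coeff_mk _ _

@[simp]
theorem ncDeriv_one : ncDeriv (1 : R⟦X⟧) = 0 := by
  ext k
  simp [coeff_one]

open Finset in
theorem ncDeriv_mul (f g : R⟦X⟧) : ncDeriv (f * g) = ncDeriv f * g + f * ncDeriv g := by
  ext k
  have leibniz : (k + 1) • coeff (k + 1) (f * g) =
      ∑ p ∈ antidiagonal (k + 1), p.1 • (coeff p.1 f * coeff p.2 g) +
        ∑ p ∈ antidiagonal (k + 1), p.2 • (coeff p.1 f * coeff p.2 g) := by
    rw [coeff_mul, smul_sum, ← sum_add_distrib]
    refine sum_congr rfl fun p hp => ?_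
    rw [← add_smul, mem_antidiagonal.mp hp]
  rw [coeff_ncDeriv, leibniz, Nat.sum_antidiagonal_succ, Nat.sum_antidiagonal_succ']
  simp only [zero_smul, zero_add, map_add, coeff_mul, coeff_ncDeriv,
    smul_mul_assoc, mul_smul_comm]

end Semiring

theorem ncDeriv_eq_neg_mul_of_mul_eq_one {R : Type*} [Ring R] {σ μ ψ : R⟦X⟧}
    (hμ : IsUnit μ) (hσμ : σ * μ = 1) (hσ : ncDeriv σ = σ * ψ) : ncDeriv μ = -(ψ * μ) := by
  obtain ⟨u, rfl⟩ := hμ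
  have hσ_unit : IsUnit σ := Units.eq_inv_of_mul_eq_one_right hσμ ▸ u⁻¹.isUnit
  have hderiv := congrArg ncDeriv hσμ
  rw [ncDeriv_mul, ncDeriv_one, hσ, mul_assoc, ← mul_add, hσ_unit.mul_right_eq_zero] at hderiv
  exact eq_neg_of_add_eq_zero_right hderiv

end PowerSeries

theorem piu_append_singleton (l : List ℕ) (a : ℕ) : piu (l ++ [a]) = piu l * (l.sum + a) := by
  unfold piu
  rw [List.length_append, List.length_singleton, List.range_succ, List.map_append,
    List.prod_append]
  congr 1
  · congr 1
    refine List.map_congr_left fun j hj => ?_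
    rw [List.take_append_of_le_length (by simpa using hj)]
  · simp [List.take_of_length_le]

namespace Composition

def cons (k : ℕ) (i : Fin (k + 1)) (c : Composition (k - i)) : Composition (k + 1) where
  blocks := ((i : ℕ) + 1) :: c.blocks
  blocks_pos := by
    simpa using fun _ => c.blocks_pos
  blocks_sum := by
    have := i.isLt
    simp only [List.sum_cons, c.blocks_sum]
    omega

@[simp]
theorem cons_blocks (k : ℕ) (i : Fin (k + 1)) (c : Composition (k - i)) :
    (cons k i c).blocks = ((i : ℕ) + 1) :: c.blocks :=
  rfl

@[simp]
theorem cons_length (k : ℕ) (i : Fin (k + 1)) (c : Composition (k - i)) :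
    (cons k i c).length = c.length + 1 :=
  rfl

theorem piu_reverse_cons (k : ℕ) (i : Fin (k + 1)) (c : Composition (k - i)) :
    piu (c.cons k i).blocks.reverse = piu c.blocks.reverse * (k + 1) := by
  have := i.isLt
  rw [cons_blocks, List.reverse_cons, piu_append_singleton, List.sum_reverse, c.blocks_sum]
  congr 1
  omega

theorem cons_bijective (k : ℕ) :
    Function.Bijective fun x : Σ i : Fin (k + 1), Composition (k - i) => cons k x.1 x.2 := by
  constructor
  · rintro ⟨i, c⟩ ⟨i', c'⟩ h
    obtain ⟨hi, hc⟩ := List.cons_eq_cons.mp (congrArg blocks h)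
    obtain rfl : i = i' := Fin.ext (Nat.succ_injective hi)
    obtain rfl : c = c' := Composition.ext hc
    rfl
  · intro J
    obtain ⟨b, t, hbt⟩ : ∃ b t, J.blocks = b :: t := by
      cases h : J.blocks with
      | nil => simpa [h] using J.blocks_sum
      | cons b t => exact ⟨b, t, rfl⟩
    have hb : 0 < b := J.blocks_pos (by simp [hbt])
    have hsum : b + t.sum = k + 1 := by simpa [hbt] using J.blocks_sum
    refine ⟨⟨⟨b - 1, by omega⟩, ⟨t, fun hj => J.blocks_pos (by simp [hbt, hj]), ?_⟩⟩, ?_⟩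
    · dsimp only
      omega
    · apply Composition.ext
      simp only [cons, hbt]
      congr
      omega

theorem sum_univ_succ {M : Type*} [AddCommMonoid M] (k : ℕ) (f : Composition (k + 1) → M) :
    ∑ c, f c = ∑ i : Fin (k + 1), ∑ c : Composition (k - i), f (cons k i c) := by
  rw [← (Fintype.sum_bijective _ (cons_bijective k) _ f fun _ => rfl), ← Finset.univ_sigma_univ,
    Finset.sum_sigma]

theorem sum_univ_zero {M : Type*} [AddCommMonoid M] (f : Composition 0 → M) :
    ∑ c, f c = f (ones 0) :=
  Fintype.sum_eq_single _ fun _ hc => (hc (eq_ones_iff_le_length.2 (Nat.zero_le _))).elim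

end Composition

theorem coeff_eq_sum_compositions_of_ncDeriv_eq_neg_mul {A : Type*} [Ring A] [Algebra ℚ A]
    (Psi : ℕ → A) {μ : A⟦X⟧} (h0 : constantCoeff μ = 1)
    (hμ : ncDeriv μ = -(mk (fun j => Psi (j + 1)) * μ)) (m : ℕ) :
    coeff m μ = ∑ I : Composition m,
      (((-1 : ℚ) ^ I.length) * (piu I.blocks.reverse : ℚ)⁻¹) • (I.blocks.map Psi).prod := by
  induction m using Nat.strong_induction_on with
  | _ m ih =>
  match m with
  | 0 => simp [Composition.sum_univ_zero, Composition.ones_blocks, piu, h0]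
  | k + 1 =>
    have hk : ((k : ℚ) + 1) ≠ 0 := by positivity
    have hrec : ((k : ℚ) + 1) • coeff (k + 1) μ =
        -∑ i : Fin (k + 1), Psi (i + 1) * coeff (k - i) μ := by
      have := congrArg (coeff k) hμ
      rw [coeff_ncDeriv, map_neg, coeff_mul, Finset.Nat.sum_antidiagonal_eq_sum_range_succ_mk,
        Finset.sum_range] at this
      simpa only [coeff_mk, ← Nat.cast_smul_eq_nsmul ℚ, Nat.cast_succ] using this
    apply smul_right_injective A hk
    dsimp only
    rw [hrec, Composition.sum_univ_succ, Finset.smul_sum, ← Finset.sum_neg_distrib]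
    refine Finset.sum_congr rfl fun i _ => ?_
    rw [ih _ (by omega), Finset.mul_sum, Finset.smul_sum, ← Finset.sum_neg_distrib]
    refine Finset.sum_congr rfl fun c _ => ?_
    have hcoeff : ((k : ℚ) + 1) *
        ((-1) ^ (c.cons k i).length * (piu (c.cons k i).blocks.reverse : ℚ)⁻¹) =
          -((-1) ^ c.length * (piu c.blocks.reverse : ℚ)⁻¹) := by
      rw [Composition.piu_reverse_cons, Composition.cons_length]
      push_cast
      field_simp
      ring
    rw [smul_smul, hcoeff, neg_smul, Composition.cons_blocks, List.map_cons, List.prod_cons,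
      mul_smul_comm]

/-- with `σ(t) = ∑ t^m S_m` satisfying `σ(t)λ(-t) = 1` and
`ψ(t) = ∑_{m≥1} t^{m-1} Ψ_m` defined by `dσ(t)/dt = σ(t)ψ(t)`, for each `m ≥ 1` one has
`Λ_m = (-1)^m ∑_{I ∈ C_m} ((-1)^{ℓ(I)}/π_u(Ī)) Ψ^I`, with `Ī` the reversal of `I`. -/
theorem stmt7 (S : ℕ → NSym) (Psi : ℕ → NSym)
    (hS : PowerSeries.mk S * (PowerSeries.mk fun n => (-1 : NSym) ^ n * Lam n) = 1)
    (hPsi : ∀ k : ℕ,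
      ((k : ℚ) + 1) • PowerSeries.coeff (R := NSym) (k + 1) (PowerSeries.mk S)
        = PowerSeries.coeff (R := NSym) k
            (PowerSeries.mk S * PowerSeries.mk fun j => Psi (j + 1))) :
    ∀ m : ℕ, 1 ≤ m →
      Lam m = (-1 : NSym) ^ m *
        ∑ I : Composition m,
          (((-1 : ℚ) ^ I.length) * (piu I.blocks.reverse : ℚ)⁻¹) •
            (I.blocks.map Psi).prod := by
  intro m _
  have hσ : ncDeriv (mk S) = mk S * mk fun j => Psi (j + 1) := by
    ext k
    rw [coeff_ncDeriv, ← hPsi, ← Nat.cast_smul_eq_nsmul ℚ, Nat.cast_succ]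
  have hunit : IsUnit (mk fun n => (-1 : NSym) ^ n * Lam n) :=
    isUnit_iff_constantCoeff.mpr (by simp [Lam])
  rw [← coeff_eq_sum_compositions_of_ncDeriv_eq_neg_mul Psi (by simp [Lam])
    (ncDeriv_eq_neg_mul_of_mul_eq_one hunit hS hσ), coeff_mk, ← mul_assoc, ← pow_add,
    Even.neg_one_pow ⟨m, rfl⟩, one_mul]
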